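/- Let (A_n)_{n≥1} be a strictly stationary ergodic process of nonnegative column-allowable p×p matrices with E[max(log‖A₁‖,0)] < ∞, which is weakly sequentially primitive; assume the first two Lyapunov exponents λ₁, λ₂ exist as almost-sure limits of (1/n)log σ¹_n and (1/n)log σ²_n with λ₁ − λ₂ > 0, assume the weak subexponentiality condition on ratios of entries of M_n, and assume in addition that every A_n is column stochastic (nonnegative with every column summing to 1). Then λ₂ < 0, and for every x ∈ ℝ^p, every nonnegative nonzero w ∈ ℝ^p, and every i ∈ {1,…,p}, almost surely limsup_{n→∞, over those n with e_iᵀM_n ≠ 0} (1/n) log | (e_iᵀM_n x)/(e_iᵀM_n w) − (𝟏ᵀx)/(𝟏ᵀw) | ≤ λ₂. -/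
import Mathlib


open MeasureTheory Filter Matrix
open scoped ENNReal

/-- `elog x` is the extended-real logarithm of a nonnegative real number,
with `elog x = -∞` for `x ≤ 0`. -/
noncomputable def elog (x : ℝ) : EReal := if x ≤ 0 then ⊥ else ((Real.log x : ℝ) : EReal)

/-- `Mprod A n = A (n-1) * ⋯ * A 0`, i.e. the product `M_n = A_n A_{n-1} ⋯ A_1`
of the first `n` matrices of the (0-indexed) sequence `A`. -/
def Mprod {p : ℕ} (A : ℕ → Matrix (Fin p) (Fin p) ℝ) : ℕ → Matrix (Fin p) (Fin p) ℝ
  | 0 => 1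
  | n + 1 => A n * Mprod A n

/-- Every row of `M` is either strictly positive or identically zero. -/
def RowsPosOrZero {p : ℕ} (M : Matrix (Fin p) (Fin p) ℝ) : Prop :=
  ∀ i, (∀ j, 0 < M i j) ∨ (∀ j, M i j = 0)

/-- `A` is nonnegative and column-allowable: each column contains a strictly positive entry. -/
def ColAllowable {p : ℕ} (A : Matrix (Fin p) (Fin p) ℝ) : Prop :=
  (∀ i j, 0 ≤ A i j) ∧ ∀ j, ∃ i, 0 < A i j

/-- `M = U * S * V` is a singular value decomposition: `U, V` orthogonal and `S` diagonal
with nonnegative nonincreasing diagonal entries. -/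
def IsSVD {p : ℕ} (M U S V : Matrix (Fin p) (Fin p) ℝ) : Prop :=
  Uᵀ * U = 1 ∧ U * Uᵀ = 1 ∧ Vᵀ * V = 1 ∧ V * Vᵀ = 1 ∧
  (∀ i j, i ≠ j → S i j = 0) ∧ (∀ i, 0 ≤ S i i) ∧
  (∀ i j : Fin p, i ≤ j → S j j ≤ S i i) ∧ M = U * S * V

/-- A norm on matrices (all norms on a finite-dimensional space are equivalent). -/
noncomputable def matNorm {p : ℕ} (M : Matrix (Fin p) (Fin p) ℝ) : ℝ := ∑ i, ∑ j, |M i j|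

/-- Total variation norm of a vector: `‖v‖_TV = (1/2) ∑ i |v i|`. -/
noncomputable def tvNorm {p : ℕ} (v : Fin p → ℝ) : ℝ := (1 / 2) * ∑ i, |v i|



lemma aux_colstoch_prod {p : ℕ} (A : ℕ → Matrix (Fin p) (Fin p) ℝ)
    (hA : ∀ n, (∀ i j, 0 ≤ A n i j) ∧ ∀ j, ∑ i, A n i j = 1) (n : ℕ) :
    (∀ i j, 0 ≤ Mprod A n i j) ∧ ∀ j, ∑ i, Mprod A n i j = 1 := by
  induction n with
  | zero =>
    constructor
    · intro i j; simp [Mprod, Matrix.one_apply]; positivity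
    · intro j; simp [Mprod, Matrix.one_apply]
  | succ n ih =>
    constructor
    · intro i j
      simp only [Mprod, Matrix.mul_apply]
      exact Finset.sum_nonneg fun k _ => mul_nonneg ((hA n).1 i k) (ih.1 k j)
    · intro j
      simp only [Mprod, Matrix.mul_apply]
      rw [Finset.sum_comm]
      have : ∀ k, ∑ i, A n i k * Mprod A n k j = Mprod A n k j := by
        intro k; rw [← Finset.sum_mul, (hA n).2 k, one_mul]
      simp only [this, ih.2 j]

lemma aux_rows_propagate {p : ℕ} {B M : Matrix (Fin p) (Fin p) ℝ}
    (hB : ∀ i j, 0 ≤ B i j) (hM : RowsPosOrZero M) : RowsPosOrZero (B * M) := by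
  intro i
  by_cases h : ∀ j, (B * M) i j = 0
  · exact Or.inr h
  · left
    push_neg at h
    obtain ⟨j, hj⟩ := h
    have hMnn : ∀ k l, 0 ≤ M k l := by
      intro k l
      rcases hM k with h' | h'
      · exact (h' l).le
      · exact (h' l).ge
    have : ∃ k, 0 < B i k * M k j := by
      by_contra hc
      push_neg at hc
      apply hj
      rw [Matrix.mul_apply]
      refine Finset.sum_eq_zero fun k _ => le_antisymm (hc k) (mul_nonneg (hB i k) (hMnn k j))
    obtain ⟨k, hk⟩ := this
    have hBik : 0 < B i k := by
      by_contra hb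
      push_neg at hb
      nlinarith [hMnn k j]
    have hMkj : M k j ≠ 0 := by
      intro h0; rw [h0] at hk; simp at hk
    have hMk : ∀ l, 0 < M k l := by
      rcases hM k with h' | h'
      · exact h'
      · exact absurd (h' j) hMkj
    intro l
    rw [Matrix.mul_apply]
    have : 0 < B i k * M k l := mul_pos hBik (hMk l)
    refine Finset.sum_pos' (fun m _ => mul_nonneg (hB i m) (hMnn m l)) ⟨k, Finset.mem_univ k, this⟩

lemma aux_Mprod_decomp {p : ℕ} (A : ℕ → Matrix (Fin p) (Fin p) ℝ)
    (hA : ∀ n i j, 0 ≤ A n i j) {m n : ℕ} (h : m ≤ n) :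
    ∃ B : Matrix (Fin p) (Fin p) ℝ, (∀ i j, 0 ≤ B i j) ∧ Mprod A n = B * Mprod A m := by
  induction n, h using Nat.le_induction with
  | base => exact ⟨1, fun i j => by simp [Matrix.one_apply]; positivity, by rw [Matrix.one_mul]⟩
  | succ n hmn ih =>
    obtain ⟨B, hB, hBe⟩ := ih
    refine ⟨A n * B, fun i j => ?_, ?_⟩
    · rw [Matrix.mul_apply]
      exact Finset.sum_nonneg fun k _ => mul_nonneg (hA n i k) (hB k j)
    show A n * Mprod A n = A n * B * Mprod A m
    rw [hBe, Matrix.mul_assoc]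



lemma aux_sq_le (x y : ℝ) (hx : 0 ≤ x) (hy : 0 ≤ y) (h : x ^ 2 ≤ y ^ 2) : x ≤ y := by
  calc x = Real.sqrt (x ^ 2) := (Real.sqrt_sq hx).symm
  _ ≤ Real.sqrt (y ^ 2) := Real.sqrt_le_sqrt h
  _ = y := Real.sqrt_sq hy

lemma aux_cs {p : ℕ} (t : Finset (Fin p)) (f g : Fin p → ℝ) (Cf Cg : ℝ)
    (hCf : 0 ≤ Cf) (hCg : 0 ≤ Cg)
    (hf : ∑ k ∈ t, f k ^ 2 ≤ Cf ^ 2) (hg : ∑ k ∈ t, g k ^ 2 ≤ Cg ^ 2) :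
    ∑ k ∈ t, |f k| * |g k| ≤ Cf * Cg := by
  have h1 : (∑ k ∈ t, |f k| * |g k|) ^ 2 ≤ (∑ k ∈ t, |f k| ^ 2) * ∑ k ∈ t, |g k| ^ 2 :=
    Finset.sum_mul_sq_le_sq_mul_sq t _ _
  simp only [sq_abs] at h1
  refine aux_sq_le _ _ (Finset.sum_nonneg fun k _ => mul_nonneg (abs_nonneg _) (abs_nonneg _))
    (mul_nonneg hCf hCg) ?_
  calc (∑ k ∈ t, |f k| * |g k|) ^ 2 ≤ (∑ k ∈ t, f k ^ 2) * ∑ k ∈ t, g k ^ 2 := h1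
  _ ≤ Cf ^ 2 * Cg ^ 2 := by
      apply mul_le_mul hf hg (Finset.sum_nonneg fun k _ => sq_nonneg _) (sq_nonneg _)
  _ = (Cf * Cg) ^ 2 := by ring

lemma aux_unit_abs_le {p : ℕ} {f : Fin p → ℝ} (h : ∑ k, f k ^ 2 = 1) (k : Fin p) : |f k| ≤ 1 := by
  have h1 : f k ^ 2 ≤ 1 := by
    rw [← h]
    exact Finset.single_le_sum (fun i _ => sq_nonneg (f i)) (Finset.mem_univ k)
  calc |f k| = Real.sqrt (f k ^ 2) := (Real.sqrt_sq_eq_abs _).symm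
  _ ≤ Real.sqrt 1 := Real.sqrt_le_sqrt h1
  _ = 1 := Real.sqrt_one

lemma aux_orth_dot {p : ℕ} (W : Matrix (Fin p) (Fin p) ℝ) (hW : Wᵀ * W = 1) (y : Fin p → ℝ) :
    W.mulVec y ⬝ᵥ W.mulVec y = y ⬝ᵥ y := by
  rw [Matrix.dotProduct_mulVec, ← Matrix.mulVec_transpose, Matrix.mulVec_mulVec, hW,
    Matrix.one_mulVec]

-- diagonal action
lemma aux_diag_mulVec {p : ℕ} {S : Matrix (Fin p) (Fin p) ℝ}
    (hd : ∀ i j, i ≠ j → S i j = 0) (v : Fin p → ℝ) (k : Fin p) :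
    S.mulVec v k = S k k * v k := by
  rw [Matrix.mulVec, dotProduct]
  exact Finset.sum_eq_single k (fun b _ hb => by rw [hd k b (Ne.symm hb), zero_mul])
    (fun h => absurd (Finset.mem_univ k) h)

-- entry expansion of U*S*V
lemma aux_svd_entry {p : ℕ} {U S V : Matrix (Fin p) (Fin p) ℝ}
    (hd : ∀ i j, i ≠ j → S i j = 0) (k l : Fin p) :
    (U * S * V) k l = ∑ m, U k m * (S m m * V m l) := by
  rw [Matrix.mul_assoc, Matrix.mul_apply]
  congr 1
  funext m
  congr 1
  rw [Matrix.mul_apply]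
  exact Finset.sum_eq_single m (fun b _ hb => by rw [hd m b (Ne.symm hb), zero_mul])
    (fun h => absurd (Finset.mem_univ m) h)

lemma aux_svd_facts {p : ℕ} {M U S V : Matrix (Fin p) (Fin p) ℝ} (hsvd : IsSVD M U S V) :
    (∀ a b, ∑ k, U k a * U k b = if a = b then (1:ℝ) else 0) ∧
    (∀ a b, ∑ k, U a k * U b k = if a = b then (1:ℝ) else 0) ∧
    (∀ a b, ∑ k, V k a * V k b = if a = b then (1:ℝ) else 0) ∧
    (∀ a b, ∑ k, V a k * V b k = if a = b then (1:ℝ) else 0) := by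
  obtain ⟨hUtU, hUUt, hVtV, hVVt, _, _, _, _⟩ := hsvd
  refine ⟨fun a b => ?_, fun a b => ?_, fun a b => ?_, fun a b => ?_⟩
  · have := congrFun (congrFun hUtU a) b
    simpa [Matrix.mul_apply, Matrix.one_apply, Matrix.transpose_apply] using this
  · have := congrFun (congrFun hUUt a) b
    simpa [Matrix.mul_apply, Matrix.one_apply, Matrix.transpose_apply] using this
  · have := congrFun (congrFun hVtV a) b
    simpa [Matrix.mul_apply, Matrix.one_apply, Matrix.transpose_apply] using this
  · have := congrFun (congrFun hVVt a) b
    simpa [Matrix.mul_apply, Matrix.one_apply, Matrix.transpose_apply] using this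

/-- Every entry of `M` is at most the top singular value (in absolute value). -/
lemma aux_entry_le_sigma1 {p : ℕ} {M U S V : Matrix (Fin p) (Fin p) ℝ}
    (hsvd : IsSVD M U S V) (i0 : Fin p) (h0 : (i0 : ℕ) = 0) (k l : Fin p) :
    |M k l| ≤ S i0 i0 := by
  obtain ⟨hU1, hU2, hV1, hV2⟩ := aux_svd_facts hsvd
  obtain ⟨hUtU, hUUt, hVtV, hVVt, hd, hSnn, hmono, hM⟩ := hsvd
  have hσmax : ∀ m : Fin p, S m m ≤ S i0 i0 := by
    intro m
    exact hmono i0 m (by rw [Fin.le_def, h0]; omega)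
  have hMe : M k l = ∑ m, U k m * (S m m * V m l) := by rw [hM, aux_svd_entry hd]
  rw [hMe]
  calc |∑ m, U k m * (S m m * V m l)| ≤ ∑ m, |U k m * (S m m * V m l)| :=
        Finset.abs_sum_le_sum_abs _ _
  _ = ∑ m, S m m * (|U k m| * |V m l|) := by
      refine Finset.sum_congr rfl fun m _ => ?_
      rw [abs_mul, abs_mul, abs_of_nonneg (hSnn m)]; ring
  _ ≤ ∑ m, S i0 i0 * (|U k m| * |V m l|) := by
      refine Finset.sum_le_sum fun m _ => ?_
      exact mul_le_mul_of_nonneg_right (hσmax m) (mul_nonneg (abs_nonneg _) (abs_nonneg _))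
  _ = S i0 i0 * ∑ m, |U k m| * |V m l| := by rw [Finset.mul_sum]
  _ ≤ S i0 i0 * (1 * 1) := by
      refine mul_le_mul_of_nonneg_left ?_ (hSnn i0)
      refine aux_cs Finset.univ _ _ 1 1 zero_le_one zero_le_one ?_ ?_
      · rw [one_pow]; exact le_of_eq (by simpa [sq] using hU2 k k)
      · rw [one_pow]; exact le_of_eq (by simpa [sq] using hV1 l l)
  _ = S i0 i0 := by ring

/-- Bounds on the top singular value of a column-stochastic matrix. -/
lemma aux_sigma1_bounds {p : ℕ} (hp : 2 ≤ p) {M U S V : Matrix (Fin p) (Fin p) ℝ}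
    (hsvd : IsSVD M U S V) (hnn : ∀ i j, 0 ≤ M i j) (hcs : ∀ j, ∑ i, M i j = 1)
    (i0 : Fin p) (h0 : (i0 : ℕ) = 0) :
    1 / (p : ℝ) ≤ S i0 i0 ∧ S i0 i0 ≤ (p : ℝ) := by
  have hppos : (0:ℝ) < p := by positivity
  constructor
  · -- some entry of column i0 is at least 1/p
    have hne : (Finset.univ : Finset (Fin p)).Nonempty := ⟨i0, Finset.mem_univ _⟩
    have hsum : ∑ _k : Fin p, (1 / (p:ℝ) : ℝ) ≤ ∑ k, M k i0 := by
      rw [hcs i0, Finset.sum_const, Finset.card_univ, Fintype.card_fin, nsmul_eq_mul]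
      rw [mul_one_div, div_self (ne_of_gt hppos)]
    obtain ⟨k, _, hk⟩ := Finset.exists_le_of_sum_le hne hsum
    calc 1 / (p:ℝ) ≤ M k i0 := hk
    _ ≤ |M k i0| := le_abs_self _
    _ ≤ S i0 i0 := aux_entry_le_sigma1 hsvd i0 h0 k i0
  · -- S = Uᵀ M Vᵀ
    obtain ⟨hU1, hU2, hV1, hV2⟩ := aux_svd_facts hsvd
    obtain ⟨hUtU, hUUt, hVtV, hVVt, hd, hSnn, hmono, hM⟩ := hsvd
    have hS : S = Uᵀ * M * Vᵀ := by
      rw [hM]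
      simp only [Matrix.mul_assoc]
      rw [hVVt, Matrix.mul_one, ← Matrix.mul_assoc, hUtU, Matrix.one_mul]
    have hentry : S i0 i0 = ∑ l, (∑ k, U k i0 * M k l) * V i0 l := by
      rw [hS, Matrix.mul_apply]
      refine Finset.sum_congr rfl fun l _ => ?_
      rw [Matrix.mul_apply, Matrix.transpose_apply]
      rfl
    have hUb : ∀ k, |U k i0| ≤ 1 := aux_unit_abs_le (by simpa [sq] using hU1 i0 i0)
    have hVb : ∀ l, |V i0 l| ≤ 1 := aux_unit_abs_le (by simpa [sq] using hV2 i0 i0)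
    calc S i0 i0 ≤ |S i0 i0| := le_abs_self _
    _ ≤ ∑ l, |(∑ k, U k i0 * M k l) * V i0 l| := by
        rw [hentry]; exact Finset.abs_sum_le_sum_abs _ _
    _ ≤ ∑ l, ∑ k, M k l := by
        refine Finset.sum_le_sum fun l _ => ?_
        rw [abs_mul]
        calc |∑ k, U k i0 * M k l| * |V i0 l| ≤ |∑ k, U k i0 * M k l| * 1 :=
              mul_le_mul_of_nonneg_left (hVb l) (abs_nonneg _)
        _ = |∑ k, U k i0 * M k l| := mul_one _
        _ ≤ ∑ k, |U k i0 * M k l| := Finset.abs_sum_le_sum_abs _ _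
        _ ≤ ∑ k, M k l := by
            refine Finset.sum_le_sum fun k _ => ?_
            rw [abs_mul, abs_of_nonneg (hnn k l)]
            calc |U k i0| * M k l ≤ 1 * M k l :=
                  mul_le_mul_of_nonneg_right (hUb k) (hnn k l)
            _ = M k l := one_mul _
    _ = (p : ℝ) := by
        simp only [hcs]
        rw [Finset.sum_const, Finset.card_univ, Fintype.card_fin, nsmul_eq_mul, mul_one]

section
variable {p : ℕ}

set_option maxHeartbeats 1000000 in
/-- Main contraction estimate: for a column-stochastic matrix with an SVD whose second
singular value is small, vectors with zero coordinate-sum are contracted by `σ₂`. -/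
theorem aux_contract (hp : 2 ≤ p) {M U S V : Matrix (Fin p) (Fin p) ℝ}
    (hsvd : IsSVD M U S V) (hnn : ∀ i j, 0 ≤ M i j) (hcs : ∀ j, ∑ i, M i j = 1)
    (i0 i1 : Fin p) (h0 : (i0 : ℕ) = 0) (h1 : (i1 : ℕ) = 1)
    (hσ2 : S i1 i1 ^ 2 ≤ 1 / 2)
    (u : Fin p → ℝ) (hu : ∑ j, u j = 0) (i : Fin p) :
    |M.mulVec u i| ≤ (2 * p + 1) * S i1 i1 * Real.sqrt (∑ j, u j ^ 2) := by
  obtain ⟨hU1, hU2, hV1, hV2⟩ := aux_svd_facts hsvd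
  have hσ1p : S i0 i0 ≤ (p : ℝ) := (aux_sigma1_bounds hp hsvd hnn hcs i0 h0).2
  obtain ⟨hUtU, hUUt, hVtV, hVVt, hd, hSnn, hmono, hM⟩ := hsvd
  set P : ℝ := (p : ℝ) with hP
  have hPpos : (0:ℝ) < P := by positivity
  set onev : Fin p → ℝ := fun _ => 1 with honev
  set c : Fin p → ℝ := Uᵀ.mulVec onev with hc
  set v : Fin p → ℝ := V.mulVec u with hv
  set Nu : ℝ := Real.sqrt (∑ j, u j ^ 2) with hNu
  have hNunn : 0 ≤ Nu := Real.sqrt_nonneg _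
  set σ0 : ℝ := S i0 i0 with hσ0
  set σ2 : ℝ := S i1 i1 with hσ2d
  have hσ0nn : 0 ≤ σ0 := hSnn i0
  have hσ2nn : 0 ≤ σ2 := hSnn i1
  have hck : ∀ k, c k = ∑ i', U i' k := by
    intro k
    simp [hc, Matrix.mulVec, dotProduct, honev, Matrix.transpose_apply]
  -- Mᵀ 1 = 1
  have hMtone : Mᵀ.mulVec onev = onev := by
    funext j
    simp only [Matrix.mulVec, dotProduct, Matrix.transpose_apply, honev, mul_one]
    exact hcs j
  -- norm preservation
  have hv2 : ∑ k, v k ^ 2 = ∑ j, u j ^ 2 := by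
    have := aux_orth_dot V hVtV u
    simpa [dotProduct, sq, hv] using this
  have hc2 : ∑ k, c k ^ 2 = P := by
    have h1' : Uᵀᵀ * Uᵀ = 1 := by rw [Matrix.transpose_transpose]; exact hUUt
    have := aux_orth_dot Uᵀ h1' onev
    have hone : (onev ⬝ᵥ onev) = P := by
      simp [dotProduct, honev, hP, Finset.card_univ]
    rw [hone] at this
    simpa [dotProduct, sq, hc] using this
  -- decomposition of M.mulVec u
  have hMu : ∀ i', M.mulVec u i' = ∑ k, U i' k * (S k k * v k) := by
    intro i'
    have h1' : M.mulVec u = U.mulVec (S.mulVec v) := by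
      rw [hv, Matrix.mulVec_mulVec, Matrix.mulVec_mulVec, hM]
    rw [h1']
    rw [show U.mulVec (S.mulVec v) i' = ∑ k, U i' k * S.mulVec v k from rfl]
    exact Finset.sum_congr rfl fun k _ => by rw [aux_diag_mulVec hd v k]
  -- sum σ c v = 0
  have hscv : ∑ k, S k k * c k * v k = 0 := by
    have h1' : onev ⬝ᵥ M.mulVec u = 0 := by
      rw [Matrix.dotProduct_mulVec, ← Matrix.mulVec_transpose, hMtone]
      simpa [dotProduct, honev] using hu
    have h2' : onev ⬝ᵥ M.mulVec u = ∑ k, S k k * c k * v k := by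
      rw [dotProduct]
      simp only [honev, one_mul]
      rw [show (fun i' => M.mulVec u i') = fun i' => ∑ k, U i' k * (S k k * v k) from
        funext hMu]
      rw [Finset.sum_comm]
      refine Finset.sum_congr rfl fun k _ => ?_
      rw [hck k, ← Finset.sum_mul]
      ring
    rw [← h2', h1']
  -- ∑ (σ_k c_k)² = P
  have hSc2 : ∑ k, (S k k * c k) ^ 2 = P := by
    have hSt : Sᵀ = S := by
      funext a b
      rw [Matrix.transpose_apply]
      by_cases hab : a = b
      · rw [hab]
      · rw [hd b a (Ne.symm hab), hd a b hab]
    have hMt : Mᵀ = Vᵀ * (S * Uᵀ) := by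
      rw [hM, Matrix.transpose_mul, Matrix.transpose_mul, hSt]
    have hSU : (S * Uᵀ).mulVec onev = S.mulVec c := by
      rw [← Matrix.mulVec_mulVec, hc]
    have hone : onev = Vᵀ.mulVec (S.mulVec c) := by
      rw [← hMtone, hMt, ← Matrix.mulVec_mulVec, hSU]
    have h1' : Vᵀᵀ * Vᵀ = 1 := by rw [Matrix.transpose_transpose]; exact hVVt
    have honeP : (onev ⬝ᵥ onev) = P := by
      simp [dotProduct, honev, hP, Finset.card_univ]
    have hdot : (S.mulVec c) ⬝ᵥ (S.mulVec c) = ∑ k, (S k k * c k) ^ 2 := by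
      rw [dotProduct]
      refine Finset.sum_congr rfl fun k _ => ?_
      rw [aux_diag_mulVec hd c k, sq]
    calc ∑ k, (S k k * c k) ^ 2 = (S.mulVec c) ⬝ᵥ (S.mulVec c) := hdot.symm
    _ = onev ⬝ᵥ onev := by
        rw [hone]; exact (aux_orth_dot Vᵀ h1' (S.mulVec c)).symm
    _ = P := honeP
  -- monotonicity off i0
  have hmono' : ∀ k : Fin p, k ≠ i0 → S k k ≤ σ2 := by
    intro k hk
    refine hmono i1 k ?_
    rw [Fin.le_def, h1]
    have : (k : ℕ) ≠ 0 := fun hk0 => hk (Fin.ext (by rw [hk0, h0]))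
    omega
  set t : Finset (Fin p) := Finset.univ.erase i0 with ht
  have hsplit : ∀ f : Fin p → ℝ, ∑ k, f k = f i0 + ∑ k ∈ t, f k := by
    intro f
    rw [ht, ← Finset.add_sum_erase _ f (Finset.mem_univ i0)]
  -- B1 : tail bound
  have hctail : ∑ k ∈ t, c k ^ 2 ≤ P := by
    have h' : ∑ k ∈ t, c k ^ 2 ≤ ∑ k, c k ^ 2 :=
      Finset.sum_le_sum_of_subset_of_nonneg (Finset.subset_univ t)
        (fun k _ _ => sq_nonneg _)
    linarith [hc2]
  have hvtail : ∑ k ∈ t, v k ^ 2 ≤ Nu ^ 2 := by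
    have : Nu ^ 2 = ∑ j, u j ^ 2 := Real.sq_sqrt (Finset.sum_nonneg fun j _ => sq_nonneg _)
    rw [this, ← hv2]
    exact Finset.sum_le_sum_of_subset_of_nonneg (Finset.subset_univ t)
      (fun k _ _ => sq_nonneg _)
  have hsqrtP : Real.sqrt P ^ 2 = P := Real.sq_sqrt hPpos.le
  have B1 : |∑ k ∈ t, S k k * c k * v k| ≤ σ2 * (Real.sqrt P * Nu) := by
    calc |∑ k ∈ t, S k k * c k * v k| ≤ ∑ k ∈ t, |S k k * c k * v k| :=
          Finset.abs_sum_le_sum_abs _ _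
    _ = ∑ k ∈ t, S k k * (|c k| * |v k|) := by
        refine Finset.sum_congr rfl fun k hk => ?_
        rw [abs_mul, abs_mul, abs_of_nonneg (hSnn k)]; ring
    _ ≤ ∑ k ∈ t, σ2 * (|c k| * |v k|) := by
        refine Finset.sum_le_sum fun k hk => ?_
        exact mul_le_mul_of_nonneg_right (hmono' k (Finset.ne_of_mem_erase hk))
          (mul_nonneg (abs_nonneg _) (abs_nonneg _))
    _ = σ2 * ∑ k ∈ t, |c k| * |v k| := by rw [Finset.mul_sum]
    _ ≤ σ2 * (Real.sqrt P * Nu) := by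
        refine mul_le_mul_of_nonneg_left ?_ hσ2nn
        exact aux_cs t c v (Real.sqrt P) Nu (Real.sqrt_nonneg _) hNunn
          (by rw [hsqrtP]; exact hctail) hvtail
  -- B2 : σ0 |c i0| is large
  have B2 : Real.sqrt (P / 2) ≤ σ0 * |c i0| := by
    have htail2 : ∑ k ∈ t, (S k k * c k) ^ 2 ≤ P / 2 := by
      calc ∑ k ∈ t, (S k k * c k) ^ 2 ≤ ∑ k ∈ t, (1/2) * c k ^ 2 := by
            refine Finset.sum_le_sum fun k hk => ?_
            have h1' : S k k ^ 2 ≤ 1/2 := by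
              have := hmono' k (Finset.ne_of_mem_erase hk)
              nlinarith [hSnn k]
            rw [mul_pow]
            nlinarith [sq_nonneg (c k)]
      _ = (1/2) * ∑ k ∈ t, c k ^ 2 := by rw [Finset.mul_sum]
      _ ≤ (1/2) * P := by linarith [hctail]
      _ = P / 2 := by ring
    have hhead : P / 2 ≤ (σ0 * c i0) ^ 2 := by
      have hsp := hsplit (fun k => (S k k * c k) ^ 2)
      rw [hSc2] at hsp
      have he : σ0 * c i0 = S i0 i0 * c i0 := rfl
      rw [he]
      linarith [htail2]
    calc Real.sqrt (P / 2) ≤ Real.sqrt ((σ0 * c i0) ^ 2) := Real.sqrt_le_sqrt hhead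
    _ = |σ0 * c i0| := Real.sqrt_sq_eq_abs _
    _ = σ0 * |c i0| := by rw [abs_mul, abs_of_nonneg hσ0nn]
  -- B3
  have B3 : σ0 * |c i0| * |v i0| ≤ σ2 * (Real.sqrt P * Nu) := by
    have h1' : S i0 i0 * c i0 * v i0 = -∑ k ∈ t, S k k * c k * v k := by
      have := hsplit (fun k => S k k * c k * v k)
      rw [hscv] at this
      linarith
    calc σ0 * |c i0| * |v i0| = |S i0 i0 * c i0 * v i0| := by
          rw [abs_mul, abs_mul, abs_of_nonneg hσ0nn]
    _ = |∑ k ∈ t, S k k * c k * v k| := by rw [h1', abs_neg]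
    _ ≤ σ2 * (Real.sqrt P * Nu) := B1
  -- B5 : σ0 |v i0| ≤ √2 P σ2 Nu
  have hsqrt2 : Real.sqrt 2 * Real.sqrt (P/2) = Real.sqrt P := by
    rw [← Real.sqrt_mul (by norm_num : (0:ℝ) ≤ 2)]
    congr 1; ring
  have hsqPhalf : (0:ℝ) < Real.sqrt (P/2) := Real.sqrt_pos.mpr (by linarith)
  have B5 : σ0 * |v i0| ≤ Real.sqrt 2 * P * σ2 * Nu := by
    have key : (σ0 * |v i0|) * Real.sqrt (P/2) ≤ (Real.sqrt 2 * P * σ2 * Nu) * Real.sqrt (P/2) := by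
      calc (σ0 * |v i0|) * Real.sqrt (P/2) ≤ (σ0 * |v i0|) * (σ0 * |c i0|) :=
            mul_le_mul_of_nonneg_left B2 (mul_nonneg hσ0nn (abs_nonneg _))
      _ = σ0 * (σ0 * |c i0| * |v i0|) := by ring
      _ ≤ σ0 * (σ2 * (Real.sqrt P * Nu)) :=
            mul_le_mul_of_nonneg_left B3 hσ0nn
      _ ≤ P * (σ2 * (Real.sqrt P * Nu)) :=
            mul_le_mul_of_nonneg_right hσ1p
              (mul_nonneg hσ2nn (mul_nonneg (Real.sqrt_nonneg _) hNunn))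
      _ = (Real.sqrt 2 * P * σ2 * Nu) * Real.sqrt (P/2) := by
            rw [← hsqrt2]; ring
    exact le_of_mul_le_mul_right key hsqPhalf
  -- final assembly
  have hUrow : ∑ k ∈ t, U i k ^ 2 ≤ 1 := by
    have h1' : ∑ k, U i k ^ 2 = 1 := by simpa [sq] using hU2 i i
    rw [← h1']
    exact Finset.sum_le_sum_of_subset_of_nonneg (Finset.subset_univ t)
      (fun k _ _ => sq_nonneg _)
  have hUabs : |U i i0| ≤ 1 := aux_unit_abs_le (by simpa [sq] using hU2 i i) i0
  have hsqrt2le : Real.sqrt 2 ≤ 2 := by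
    nlinarith [Real.sq_sqrt (by norm_num : (0:ℝ) ≤ 2), Real.sqrt_nonneg 2]
  calc |M.mulVec u i| = |U i i0 * (S i0 i0 * v i0) + ∑ k ∈ t, U i k * (S k k * v k)| := by
        rw [hMu i, hsplit (fun k => U i k * (S k k * v k))]
  _ ≤ |U i i0 * (S i0 i0 * v i0)| + |∑ k ∈ t, U i k * (S k k * v k)| := abs_add_le _ _
  _ ≤ σ0 * |v i0| + σ2 * Nu := by
      gcongr
      · calc |U i i0 * (S i0 i0 * v i0)| = |U i i0| * (σ0 * |v i0|) := by
              rw [abs_mul, abs_mul, abs_of_nonneg hσ0nn]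
        _ ≤ 1 * (σ0 * |v i0|) :=
              mul_le_mul_of_nonneg_right hUabs (mul_nonneg hσ0nn (abs_nonneg _))
        _ = σ0 * |v i0| := one_mul _
      · calc |∑ k ∈ t, U i k * (S k k * v k)| ≤ ∑ k ∈ t, |U i k * (S k k * v k)| :=
              Finset.abs_sum_le_sum_abs _ _
        _ = ∑ k ∈ t, S k k * (|U i k| * |v k|) := by
            refine Finset.sum_congr rfl fun k hk => ?_
            rw [abs_mul, abs_mul, abs_of_nonneg (hSnn k)]; ring
        _ ≤ ∑ k ∈ t, σ2 * (|U i k| * |v k|) := by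
            refine Finset.sum_le_sum fun k hk => ?_
            exact mul_le_mul_of_nonneg_right (hmono' k (Finset.ne_of_mem_erase hk))
              (mul_nonneg (abs_nonneg _) (abs_nonneg _))
        _ = σ2 * ∑ k ∈ t, |U i k| * |v k| := by rw [Finset.mul_sum]
        _ ≤ σ2 * (1 * Nu) := by
            refine mul_le_mul_of_nonneg_left ?_ hσ2nn
            exact aux_cs t (U i) v 1 Nu zero_le_one hNunn (by rwa [one_pow]) hvtail
        _ = σ2 * Nu := by rw [one_mul]
  _ ≤ Real.sqrt 2 * P * σ2 * Nu + σ2 * Nu := by linarith [B5]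
  _ ≤ 2 * P * σ2 * Nu + σ2 * Nu := by
      have : Real.sqrt 2 * P * σ2 * Nu ≤ 2 * P * σ2 * Nu := by
        have hn : 0 ≤ P * σ2 * Nu := by positivity
        nlinarith
      linarith
  _ = (2 * P + 1) * σ2 * Nu := by ring
  
end



lemma aux_elog_le {x q : ℝ} {n : ℕ} (hn : 1 ≤ n) (h : x ≤ Real.exp (q * n)) :
    (((n : ℝ)⁻¹ : ℝ) : EReal) * elog x ≤ (q : EReal) := by
  have hnpos : (0:ℝ) < n := by exact_mod_cast hn
  by_cases hx : x ≤ 0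
  · rw [elog, if_pos hx, EReal.coe_mul_bot_of_pos (by positivity)]
    exact bot_le
  · rw [elog, if_neg hx, ← EReal.coe_mul, EReal.coe_le_coe_iff]
    push_neg at hx
    have hlog : Real.log x ≤ q * n := by
      calc Real.log x ≤ Real.log (Real.exp (q * n)) := Real.log_le_log hx h
      _ = q * n := Real.log_exp _
    calc (n:ℝ)⁻¹ * Real.log x ≤ (n:ℝ)⁻¹ * (q * n) := by
          exact mul_le_mul_of_nonneg_left hlog (by positivity)
    _ = q := by field_simp
lemma aux_elog_extract {x r : ℝ} {n : ℕ} (hn : 1 ≤ n) (hx : 0 ≤ x)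
    (h : (((n : ℝ)⁻¹ : ℝ) : EReal) * elog x < (r : EReal)) : x ≤ Real.exp (r * n) := by
  have hnpos : (0:ℝ) < n := by exact_mod_cast hn
  by_cases hx0 : x ≤ 0
  · have : x = 0 := le_antisymm hx0 hx
    rw [this]; positivity
  · push_neg at hx0
    rw [elog, if_neg (not_le.mpr hx0), ← EReal.coe_mul, EReal.coe_lt_coe_iff] at h
    have hlog : Real.log x < r * n := by
      have := mul_lt_mul_of_pos_left h hnpos
      rw [← mul_assoc, mul_inv_cancel₀ (ne_of_gt hnpos), one_mul] at this
      linarith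
    calc x = Real.exp (Real.log x) := (Real.exp_log hx0).symm
    _ ≤ Real.exp (r * n) := Real.exp_le_exp.mpr hlog.le

lemma aux_ev_le_exp (C ε : ℝ) (hε : 0 < ε) : ∀ᶠ n : ℕ in atTop, C ≤ Real.exp (ε * n) := by
  by_cases hC : C ≤ 0
  · exact Filter.Eventually.of_forall fun n => le_trans hC (Real.exp_pos _).le
  · push_neg at hC
    have htend : Tendsto (fun n : ℕ => ε * n) atTop atTop :=
      (tendsto_natCast_atTop_atTop (R := ℝ)).const_mul_atTop hε
    filter_upwards [htend.eventually_ge_atTop (Real.log C)] with n hn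
    calc C = Real.exp (Real.log C) := (Real.exp_log hC).symm
    _ ≤ Real.exp (ε * n) := Real.exp_le_exp.mpr hn

lemma aux_ev_exp_le (r b : ℝ) (hr : r < 0) (hb : 0 < b) :
    ∀ᶠ n : ℕ in atTop, Real.exp (r * n) ≤ b := by
  have htend : Tendsto (fun n : ℕ => r * n) atTop atBot :=
    Filter.Tendsto.const_mul_atTop_of_neg hr (tendsto_natCast_atTop_atTop (R := ℝ))
  have h2 := (Real.tendsto_exp_atBot).comp htend
  exact h2.eventually_le_const hb

lemma aux_pinch (L lam2 : EReal) (hneg : lam2 < 0)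
    (h : ∀ q : ℚ, lam2 < ((q : ℝ) : EReal) → (q : ℝ) < 0 → L ≤ ((q : ℝ) : EReal)) :
    L ≤ lam2 := by
  by_contra hc
  push_neg at hc
  obtain ⟨c, hc1, hc2⟩ := exists_between hc
  set c' : EReal := min c 0 with hc'
  have hlam2c' : lam2 < c' := lt_min hc1 hneg
  have hc'L : c' < L := lt_of_le_of_lt (min_le_left _ _) hc2
  have hc'bot : c' ≠ ⊥ := fun hb => by rw [hb] at hlam2c'; exact not_lt_bot hlam2c'
  have hc'top : c' ≠ ⊤ :=
    ne_top_of_le_ne_top (by simp : (0 : EReal) ≠ ⊤) (min_le_right _ _)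
  have hc'real : ((c'.toReal : ℝ) : EReal) = c' := EReal.coe_toReal hc'top hc'bot
  have hc'neg : c'.toReal ≤ 0 := by
    have h0 : c' ≤ (0 : EReal) := min_le_right _ _
    rw [← hc'real] at h0
    exact_mod_cast h0
  -- find a rational strictly between lam2 and c'
  have : ∃ q : ℚ, lam2 < ((q:ℝ):EReal) ∧ ((q:ℝ):EReal) < c' := by
    by_cases hbot : lam2 = ⊥
    · obtain ⟨q, hq⟩ := exists_rat_lt c'.toReal
      refine ⟨q, by rw [hbot]; exact bot_lt_iff_ne_bot.mpr (by simp), ?_⟩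
      rw [← hc'real]
      exact_mod_cast hq
    · have hlt : lam2.toReal < c'.toReal := by
        have hl2real : ((lam2.toReal : ℝ) : EReal) = lam2 :=
          EReal.coe_toReal (ne_top_of_lt hneg) hbot
        rw [← hl2real, ← hc'real] at hlam2c'
        exact_mod_cast hlam2c'
      obtain ⟨q, hq1, hq2⟩ := exists_rat_btwn hlt
      have hl2real : ((lam2.toReal : ℝ) : EReal) = lam2 :=
        EReal.coe_toReal (ne_top_of_lt hneg) hbot
      refine ⟨q, ?_, ?_⟩
      · rw [← hl2real]; exact_mod_cast hq1
      · rw [← hc'real]; exact_mod_cast hq2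
  obtain ⟨q, hq1, hq2⟩ := this
  have hqneg : (q:ℝ) < 0 := by
    have : ((q:ℝ):EReal) < c' := hq2
    rw [← hc'real] at this
    have : (q:ℝ) < c'.toReal := by exact_mod_cast this
    linarith
  have := h q hq1 hqneg
  exact absurd (lt_of_le_of_lt this (lt_trans hq2 hc'L)) (lt_irrefl L)

lemma aux_col_ge {p : ℕ} (hp : 1 ≤ p) {M : Matrix (Fin p) (Fin p) ℝ} {k : Fin p}
    (h : ∑ i, M i k = 1) : ∃ i', 1 / (p : ℝ) ≤ M i' k := by
  have hppos : (0:ℝ) < p := by exact_mod_cast hp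
  have hne : (Finset.univ : Finset (Fin p)).Nonempty := ⟨⟨0, by omega⟩, Finset.mem_univ _⟩
  have hsum : ∑ _i : Fin p, (1 / (p:ℝ) : ℝ) ≤ ∑ i, M i k := by
    rw [h, Finset.sum_const, Finset.card_univ, Fintype.card_fin, nsmul_eq_mul]
    rw [mul_one_div, div_self (ne_of_gt hppos)]
  obtain ⟨i', _, hi'⟩ := Finset.exists_le_of_sum_le hne hsum
  exact ⟨i', hi'⟩

lemma aux_abs_log_le {P x : ℝ} (hP : 1 ≤ P) (h1 : 1 / P ≤ x) (h2 : x ≤ P) :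
    |Real.log x| ≤ Real.log P := by
  have hPpos : (0:ℝ) < P := by linarith
  have hxpos : (0:ℝ) < x := lt_of_lt_of_le (by positivity) h1
  rw [abs_le]
  constructor
  · have : Real.log (1 / P) ≤ Real.log x := Real.log_le_log (by positivity) h1
    rw [one_div, Real.log_inv] at this
    linarith
  · exact Real.log_le_log hxpos h2

set_option maxHeartbeats 1600000

/-- Under the hypotheses of Statement 2, if moreover every `Aₙ` is
column stochastic, then `lam2 < 0`, and for any initial values `x ∈ ℝᵖ` and nonnegative
nonzero weights `w`, for every `i`, almost surely
`limsup_{n → ∞, eᵢᵀMₙ ≠ 0} (1/n) log |(eᵢᵀMₙx)/(eᵢᵀMₙw) − (𝟏ᵀx)/(𝟏ᵀw)| ≤ lam2`. -/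
theorem statement3 {p : ℕ} (hp : 2 ≤ p) {Ω : Type*} [MeasurableSpace Ω]
    (μ : Measure Ω) [IsProbabilityMeasure μ]
    (T : Ω → Ω) (hT : Ergodic T μ)
    (AP : Ω → ℕ → Matrix (Fin p) (Fin p) ℝ)
    (hAmeas : ∀ n i j, Measurable (fun ω => AP ω n i j))
    (hstat : ∀ ω n, AP ω (n + 1) = AP (T ω) n)
    (hallow : ∀ᵐ ω ∂μ, ∀ n, ColAllowable (AP ω n))
    (hint : ∫⁻ ω, ENNReal.ofReal (max (Real.log (matNorm (AP ω 0))) 0) ∂μ < ⊤)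
    (τ : Ω → ℕ) (hτmeas : Measurable τ)
    (hprim : ∀ᵐ ω ∂μ, RowsPosOrZero (Mprod (AP ω) (τ ω)))
    (S : Ω → ℕ → Matrix (Fin p) (Fin p) ℝ)
    (hSVD : ∀ᵐ ω ∂μ, ∀ n, ∃ U V, IsSVD (Mprod (AP ω) n) U (S ω n) V)
    (lam1 lam2 : EReal) (hlam1top : lam1 ≠ ⊤) (hlam2top : lam2 ≠ ⊤)
    (hlam1 : ∀ᵐ ω ∂μ, Tendsto
      (fun n : ℕ => (((n : ℝ)⁻¹ : ℝ) : EReal) * elog (S ω n ⟨0, by omega⟩ ⟨0, by omega⟩))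
      atTop (nhds lam1))
    (hlam2 : ∀ᵐ ω ∂μ, Tendsto
      (fun n : ℕ => (((n : ℝ)⁻¹ : ℝ) : EReal) * elog (S ω n ⟨1, by omega⟩ ⟨1, by omega⟩))
      atTop (nhds lam2))
    (hgap : (0 : EReal) < lam1 - lam2)
    (hsub : ∀ i j k : Fin p, ∀ ε : ℝ, 0 < ε → ∀ᵐ ω ∂μ, ∀ᶠ n in atTop,
      Mprod (AP ω) n j k = 0 ∨
        Mprod (AP ω) n i k ≤ Real.exp (ε * n) * Mprod (AP ω) n j k)
    (hcolstoch : ∀ᵐ ω ∂μ, ∀ n, (∀ i j, 0 ≤ AP ω n i j) ∧ ∀ j, ∑ i, AP ω n i j = 1) :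
    lam2 < 0 ∧
      ∀ x w : Fin p → ℝ, (∀ i, 0 ≤ w i) → w ≠ 0 → ∀ i : Fin p,
        ∀ᵐ ω ∂μ,
          Filter.limsup (fun n : ℕ => (((n : ℝ)⁻¹ : ℝ) : EReal) * elog
              |(Mprod (AP ω) n).mulVec x i / (Mprod (AP ω) n).mulVec w i -
                (∑ j, x j) / (∑ j, w j)|)
            (atTop ⊓ Filter.principal {n : ℕ | Mprod (AP ω) n i ≠ 0})
            ≤ lam2 := by
  have hppos : (0:ℝ) < p := by positivity
  have hp1 : (1:ℝ) ≤ p := by exact_mod_cast (by omega : 1 ≤ p)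
  set i0 : Fin p := ⟨0, by omega⟩ with hi0
  set i1 : Fin p := ⟨1, by omega⟩ with hi1
  -- ===== Part 1 : lam1 = 0, hence lam2 < 0 =====
  have haebot : (Filter.NeBot (ae μ)) :=
    MeasureTheory.ae_neBot.mpr (IsProbabilityMeasure.ne_zero μ)
  have hlam1eq : lam1 = 0 := by
    obtain ⟨ω, hω1, hω2, hω3⟩ := (hlam1.and (hSVD.and hcolstoch)).exists
    have hMf := fun n => aux_colstoch_prod (AP ω) hω3 n
    have hbnd : ∀ n : ℕ, 1 / (p:ℝ) ≤ S ω n i0 i0 ∧ S ω n i0 i0 ≤ (p:ℝ) := by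
      intro n
      obtain ⟨U, V, hsvd⟩ := hω2 n
      exact aux_sigma1_bounds hp hsvd (hMf n).1 (hMf n).2 i0 rfl
    have hpos : ∀ n, 0 < S ω n i0 i0 := fun n =>
      lt_of_lt_of_le (by positivity) (hbnd n).1
    have hreal : Tendsto (fun n : ℕ => (n:ℝ)⁻¹ * Real.log (S ω n i0 i0)) atTop (nhds 0) := by
      apply squeeze_zero_norm (a := fun n : ℕ => (n:ℝ)⁻¹ * Real.log p)
      · intro n
        rw [Real.norm_eq_abs, abs_mul, abs_of_nonneg (by positivity : (0:ℝ) ≤ (n:ℝ)⁻¹)]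
        exact mul_le_mul_of_nonneg_left
          (aux_abs_log_le hp1 (hbnd n).1 (hbnd n).2) (by positivity)
      · have h1' : Tendsto (fun n : ℕ => (n:ℝ)⁻¹) atTop (nhds 0) :=
          tendsto_inv_atTop_zero.comp tendsto_natCast_atTop_atTop
        have := h1'.mul_const (Real.log p)
        rwa [zero_mul] at this
    have hE : Tendsto (fun n : ℕ => (((n:ℝ)⁻¹ : ℝ) : EReal) * elog (S ω n i0 i0))
        atTop (nhds (0 : EReal)) := by
      have := EReal.tendsto_coe.mpr hreal
      refine this.congr fun n => ?_
      rw [elog, if_neg (not_le.mpr (hpos n)), ← EReal.coe_mul]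
    exact tendsto_nhds_unique hω1 hE
  have hlam2neg : lam2 < 0 := by
    rw [hlam1eq, zero_sub] at hgap
    have := EReal.lt_neg_comm.mp hgap
    simpa using this
  refine ⟨hlam2neg, ?_⟩
  -- ===== Part 2 =====
  intro x w hww hwne i
  set W : ℝ := ∑ j, w j with hWdef
  have hW : 0 < W := by
    obtain ⟨j, hj⟩ := Function.ne_iff.mp hwne
    exact Finset.sum_pos' (fun j' _ => hww j')
      ⟨j, Finset.mem_univ j, lt_of_le_of_ne (hww j) (Ne.symm hj)⟩
  set cst : ℝ := (∑ j, x j) / W with hcst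
  set u : Fin p → ℝ := fun j => x j - cst * w j with hudef
  have hu0 : ∑ j, u j = 0 := by
    simp only [hudef, Finset.sum_sub_distrib, ← Finset.mul_sum, ← hWdef]
    rw [hcst, div_mul_cancel₀ _ (ne_of_gt hW)]
    ring
  set Nu : ℝ := Real.sqrt (∑ j, u j ^ 2) with hNudef
  have hNunn : 0 ≤ Nu := Real.sqrt_nonneg _
  set C : ℝ := (2 * (p:ℝ) + 1) * Nu * (p:ℝ) / W with hCdef
  -- rate functions
  set rr : ℚ → ℝ := fun q => if lam2 = ⊥ then (q:ℝ) - 1 else (lam2.toReal + (q:ℝ)) / 2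
    with hrrdef
  set εf : ℚ → ℝ := fun q => if 0 < (q:ℝ) - rr q then ((q:ℝ) - rr q) / 2 else 1 with hεdef
  have hεpos : ∀ q, 0 < εf q := by
    intro q
    by_cases h : 0 < (q:ℝ) - rr q
    · simp only [hεdef, if_pos h]; linarith
    · simp only [hεdef, if_neg h]; norm_num
  have hkey : ∀ q : ℚ, lam2 < ((q:ℝ) : EReal) → (q:ℝ) < 0 →
      lam2 < ((rr q : ℝ) : EReal) ∧ rr q + 2 * εf q = (q:ℝ) ∧ rr q < 0 := by
    intro q hq hq0
    by_cases hbot : lam2 = ⊥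
    · have hrrq : rr q = (q:ℝ) - 1 := by simp only [hrrdef, if_pos hbot]
      have hposd : 0 < (q:ℝ) - rr q := by rw [hrrq]; linarith
      have hεq : εf q = ((q:ℝ) - rr q) / 2 := by simp only [hεdef, if_pos hposd]
      refine ⟨by rw [hbot]; exact bot_lt_iff_ne_bot.mpr (by simp), ?_, by rw [hrrq]; linarith⟩
      rw [hεq]; ring
    · have htreal : ((lam2.toReal : ℝ) : EReal) = lam2 := EReal.coe_toReal hlam2top hbot
      have htq : lam2.toReal < (q:ℝ) := by
        rw [← htreal] at hq; exact_mod_cast hq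
      have hrrq : rr q = (lam2.toReal + (q:ℝ)) / 2 := by simp only [hrrdef, if_neg hbot]
      have hposd : 0 < (q:ℝ) - rr q := by rw [hrrq]; linarith
      have hεq : εf q = ((q:ℝ) - rr q) / 2 := by simp only [hεdef, if_pos hposd]
      refine ⟨?_, by rw [hεq]; ring, ?_⟩
      · rw [← htreal]
        have : lam2.toReal < rr q := by rw [hrrq]; linarith
        exact_mod_cast this
      · have hl2 : lam2.toReal < 0 := by
          have h0' : ((lam2.toReal : ℝ) : EReal) < ((0:ℝ) : EReal) := by
            rw [htreal]; exact_mod_cast hlam2neg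
          exact_mod_cast h0'
        rw [hrrq]; linarith
  -- almost-every combined hypothesis
  have hae : ∀ᵐ ω ∂μ,
      (∀ n, (∀ i' j, 0 ≤ AP ω n i' j) ∧ ∀ j, ∑ i', AP ω n i' j = 1) ∧
      (∀ n, ∃ U V, IsSVD (Mprod (AP ω) n) U (S ω n) V) ∧
      RowsPosOrZero (Mprod (AP ω) (τ ω)) ∧
      Tendsto (fun n : ℕ => (((n : ℝ)⁻¹ : ℝ) : EReal) * elog (S ω n i1 i1))
        atTop (nhds lam2) ∧
      ∀ q : ℚ, ∀ i' k : Fin p, ∀ᶠ n in atTop,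
        Mprod (AP ω) n i k = 0 ∨
          Mprod (AP ω) n i' k ≤ Real.exp (εf q * n) * Mprod (AP ω) n i k := by
    refine hcolstoch.and (hSVD.and (hprim.and (hlam2.and ?_)))
    rw [MeasureTheory.ae_all_iff]
    intro q
    rw [MeasureTheory.ae_all_iff]
    intro i'
    rw [MeasureTheory.ae_all_iff]
    intro k
    exact hsub i' i k (εf q) (hεpos q)
  filter_upwards [hae] with ω hω
  obtain ⟨hcs, hsvd, hprim', hl2, hsubω⟩ := hω
  have hMf := fun n => aux_colstoch_prod (AP ω) hcs n
  have hrows : ∀ n, τ ω ≤ n → RowsPosOrZero (Mprod (AP ω) n) := by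
    intro n hn
    obtain ⟨B, hB, hBe⟩ := aux_Mprod_decomp (AP ω) (fun m i' j => (hcs m).1 i' j) hn
    rw [hBe]
    exact aux_rows_propagate hB hprim'
  have hσnn : ∀ n, 0 ≤ S ω n i1 i1 := by
    intro n
    obtain ⟨U, V, hs⟩ := hsvd n
    exact hs.2.2.2.2.2.1 i1
  apply aux_pinch _ lam2 hlam2neg
  intro q hq hq0
  obtain ⟨hq1, hq2, hq3⟩ := hkey q hq hq0
  -- eventual facts
  have ev1 : ∀ᶠ n in atTop, S ω n i1 i1 ≤ Real.exp (rr q * n) := by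
    have hlt := hl2.eventually_lt_const hq1
    filter_upwards [hlt, eventually_ge_atTop 1] with n h1 h2
    exact aux_elog_extract h2 (hσnn n) h1
  have ev2 : ∀ᶠ n : ℕ in atTop, Real.exp (rr q * n) ≤ 1/2 :=
    aux_ev_exp_le _ _ hq3 (by norm_num)
  have ev4 : ∀ᶠ n in atTop, ∀ i' k : Fin p,
      Mprod (AP ω) n i k = 0 ∨
        Mprod (AP ω) n i' k ≤ Real.exp (εf q * n) * Mprod (AP ω) n i k :=
    Filter.eventually_all.mpr fun i' => Filter.eventually_all.mpr fun k => hsubω q i' k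
  have ev6 : ∀ᶠ n : ℕ in atTop, C ≤ Real.exp (εf q * n) :=
    aux_ev_le_exp C (εf q) (hεpos q)
  refine Filter.limsup_le_of_le (by isBoundedDefault) ?_
  rw [Filter.eventually_inf_principal]
  filter_upwards [ev1, ev2, eventually_ge_atTop (τ ω), ev4, eventually_ge_atTop 1, ev6]
    with n h1 h2 h3 h4 h5 h6 hrow
  -- pointwise computation
  apply aux_elog_le h5
  obtain ⟨U, V, hsv⟩ := hsvd n
  have hnn := (hMf n).1
  have hcsn := (hMf n).2
  have hrowpos : ∀ k, 0 < Mprod (AP ω) n i k := by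
    rcases hrows n h3 i with h | h
    · exact h
    · exact absurd (by funext j; exact h j) hrow
  have hσsq : S ω n i1 i1 ^ 2 ≤ 1/2 := by
    have hle : S ω n i1 i1 ≤ 1/2 := le_trans h1 h2
    nlinarith [hσnn n]
  have hcontr := aux_contract hp hsv hnn hcsn i0 i1 rfl rfl hσsq u hu0 i
  set E : ℝ := Real.exp (εf q * n) with hEdef
  have hEpos : 0 < E := Real.exp_pos _
  have hlow : ∀ k, 1 / ((p:ℝ) * E) ≤ Mprod (AP ω) n i k := by
    intro k
    obtain ⟨i', hi'⟩ := aux_col_ge (by omega) (hcsn k)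
    rcases h4 i' k with hz | hle
    · exact absurd hz (hrowpos k).ne'
    · have h1' : 1 / (p:ℝ) ≤ E * Mprod (AP ω) n i k := le_trans hi' hle
      rw [div_le_iff₀ hppos] at h1'
      rw [div_le_iff₀ (by positivity)]
      exact le_of_le_of_eq h1' (by ring)
  have hmvw : (Mprod (AP ω) n).mulVec w i = ∑ k, Mprod (AP ω) n i k * w k := rfl
  have hdnm : W / ((p:ℝ) * E) ≤ (Mprod (AP ω) n).mulVec w i := by
    rw [hmvw]
    calc W / ((p:ℝ) * E) = ∑ k, 1 / ((p:ℝ) * E) * w k := by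
          rw [← Finset.mul_sum, ← hWdef]
          ring
    _ ≤ ∑ k, Mprod (AP ω) n i k * w k :=
          Finset.sum_le_sum fun k _ => mul_le_mul_of_nonneg_right (hlow k) (hww k)
  have hdpos : 0 < (Mprod (AP ω) n).mulVec w i :=
    lt_of_lt_of_le (by positivity) hdnm
  have hnum : (Mprod (AP ω) n).mulVec x i - cst * (Mprod (AP ω) n).mulVec w i
      = (Mprod (AP ω) n).mulVec u i := by
    rw [show (Mprod (AP ω) n).mulVec x i = ∑ k, Mprod (AP ω) n i k * x k from rfl,
      show (Mprod (AP ω) n).mulVec u i = ∑ k, Mprod (AP ω) n i k * u k from rfl,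
      hmvw, Finset.mul_sum, ← Finset.sum_sub_distrib]
    refine Finset.sum_congr rfl fun k _ => ?_
    simp only [hudef]
    ring
  have hdiff : (Mprod (AP ω) n).mulVec x i / (Mprod (AP ω) n).mulVec w i - cst
      = (Mprod (AP ω) n).mulVec u i / (Mprod (AP ω) n).mulVec w i := by
    rw [← hnum]
    field_simp
  calc |(Mprod (AP ω) n).mulVec x i / (Mprod (AP ω) n).mulVec w i - cst|
      = |(Mprod (AP ω) n).mulVec u i| / (Mprod (AP ω) n).mulVec w i := by
        rw [hdiff, abs_div, abs_of_pos hdpos]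
  _ ≤ ((2 * (p:ℝ) + 1) * S ω n i1 i1 * Nu) / (W / ((p:ℝ) * E)) := by
        refine div_le_div₀ ?_ hcontr (by positivity) hdnm
        exact mul_nonneg (mul_nonneg (by positivity) (hσnn n)) hNunn
  _ = C * S ω n i1 i1 * E := by
        rw [hCdef]
        field_simp
  _ ≤ C * Real.exp (rr q * n) * E := by
        have hCnn : 0 ≤ C := by rw [hCdef]; positivity
        exact mul_le_mul_of_nonneg_right
          (mul_le_mul_of_nonneg_left h1 hCnn) hEpos.le
  _ ≤ Real.exp (εf q * n) * Real.exp (rr q * n) * E := by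
        exact mul_le_mul_of_nonneg_right
          (mul_le_mul_of_nonneg_right h6 (Real.exp_pos _).le) hEpos.le
  _ = Real.exp ((q:ℝ) * n) := by
        rw [hEdef, ← Real.exp_add, ← Real.exp_add, ← hq2]
        congr 1
        ring
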